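/- arXiv:2206.06726 — 2 statements merged into one kernel-verified Lean document; each statement's English description precedes it below -/
import Mathlib

section
/- Let 2<α<3. For all t, s ∈ [0,1], the Green function G satisfies |G(t,s)| ≤ 3/Γ(α−1). -/
/-!
Both branches of `G` have the shape `a / Γ(α) + c / Γ(α - 1)` with `a ∈ [0, 2]` and
`c ∈ [0, 1]`, because every power of a number in `[0, 1]` with nonnegative exponent lies
in `[0, 1]`. Since `Γ(α) = (α - 1) Γ(α - 1) ≥ Γ(α - 1)` for `α ≥ 2`, this is at most
`2 / Γ(α - 1) + 1 / Γ(α - 1)`.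
-/

open MeasureTheory Set intervalIntegral

/-- Green function `G` associated to the fractional BVP, `2 < α < 3`. -/
noncomputable def greenG (α t s : ℝ) : ℝ :=
  if s ≤ t then
    ((t - s) ^ (α - 1) + (1 - t) * (1 - s) ^ (α - 1)) / Real.Gamma α
      + (1 - t) * (1 - s) ^ (α - 2) / Real.Gamma (α - 1)
  else
    (1 - t) * (1 - s) ^ (α - 1) / Real.Gamma α
      + (1 - t) * (1 - s) ^ (α - 2) / Real.Gamma (α - 1)

open Real

theorem Real.Gamma_sub_one_le_Gamma {α : ℝ} (hα : 2 ≤ α) : Gamma (α - 1) ≤ Gamma α :=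
  calc Gamma (α - 1) ≤ (α - 1) * Gamma (α - 1) :=
        le_mul_of_one_le_left (Gamma_pos_of_pos (by linarith)).le (by linarith)
    _ = Gamma α := by rw [← Gamma_add_one (by linarith), sub_add_cancel]

theorem Real.rpow_mem_unitInterval {x p : ℝ} (hx : x ∈ unitInterval) (hp : 0 ≤ p) :
    x ^ p ∈ unitInterval :=
  ⟨rpow_nonneg hx.1 p, rpow_le_one hx.1 hx.2 hp⟩

theorem abs_div_add_div_le_three_div {a c Γ₀ Γ₁ : ℝ} (ha : a ∈ Icc 0 2) (hc : c ∈ Icc 0 1)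
    (hΓ₁ : 0 < Γ₁) (hΓ : Γ₁ ≤ Γ₀) : |a / Γ₀ + c / Γ₁| ≤ 3 / Γ₁ := by
  have hΓ₀ : 0 < Γ₀ := hΓ₁.trans_le hΓ
  rw [abs_of_nonneg (add_nonneg (div_nonneg ha.1 hΓ₀.le) (div_nonneg hc.1 hΓ₁.le))]
  calc a / Γ₀ + c / Γ₁ ≤ 2 / Γ₁ + 1 / Γ₁ :=
        add_le_add ((div_le_div_of_nonneg_right ha.2 hΓ₀.le).trans
            (div_le_div_of_nonneg_left zero_le_two hΓ₁ hΓ))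
          (div_le_div_of_nonneg_right hc.2 hΓ₁.le)
    _ = 3 / Γ₁ := by ring

theorem greenG_eq (α t s : ℝ) :
    greenG α t s = ((if s ≤ t then (t - s) ^ (α - 1) else 0) + (1 - t) * (1 - s) ^ (α - 1))
      / Gamma α + (1 - t) * (1 - s) ^ (α - 2) / Gamma (α - 1) := by
  unfold greenG
  split_ifs <;> simp

theorem greenG_bound_general (α : ℝ) (hα1 : 2 < α) :
    ∀ t ∈ Icc (0:ℝ) 1, ∀ s ∈ Icc (0:ℝ) 1,
      |greenG α t s| ≤ 3 / Real.Gamma (α - 1) := by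
  intro t ht s hs
  have h1t : 1 - t ∈ unitInterval := Icc.mem_iff_one_sub_mem.mp ht
  have h1s : 1 - s ∈ unitInterval := Icc.mem_iff_one_sub_mem.mp hs
  have hts : (if s ≤ t then (t - s) ^ (α - 1) else 0) ∈ unitInterval := by
    split_ifs with hst
    · exact rpow_mem_unitInterval ⟨by linarith, by linarith [hs.1, ht.2]⟩ (by linarith)
    · exact unitInterval.zero_mem
  have hb := unitInterval.mul_mem h1t (rpow_mem_unitInterval h1s (by linarith : (0:ℝ) ≤ α - 1))
  have hc := unitInterval.mul_mem h1t (rpow_mem_unitInterval h1s (by linarith : (0:ℝ) ≤ α - 2))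
  rw [greenG_eq]
  exact abs_div_add_div_le_three_div ⟨by linarith [hts.1, hb.1], by linarith [hts.2, hb.2]⟩ hc
    (Gamma_pos_of_pos (by linarith)) (Gamma_sub_one_le_Gamma hα1.le)

/-- For `2 < α < 3`, the Green function satisfies `|G(t,s)| ≤ 3/Γ(α−1)` on the unit square. -/
theorem greenG_bound (α : ℝ) (hα1 : 2 < α) (hα2 : α < 3) :
    ∀ t ∈ Icc (0:ℝ) 1, ∀ s ∈ Icc (0:ℝ) 1,
      |greenG α t s| ≤ 3 / Real.Gamma (α - 1) :=
  greenG_bound_general α hα1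
end

section
/- Let 0<γ<1 and 2<α<3. For all t, s ∈ [0,1], the Caputo derivative of order γ in the first variable of the Green function G satisfies |ᶜDᵞₜG(t,s)| ≤ Γ(α)/Γ(α−γ) + 2/(Γ(2−γ)Γ(α−1)). -/
open MeasureTheory Set intervalIntegral

/-- Caputo fractional derivative of order `γ ∈ (0,1)`. -/
noncomputable def caputo (γ : ℝ) (u : ℝ → ℝ) (t : ℝ) : ℝ :=
  (1 / Real.Gamma (1 - γ)) * ∫ s in (0:ℝ)..t, (t - s) ^ (-γ) * deriv u s

/-- Caputo derivative of order `γ` of the Green function `G` in its first variable. -/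
noncomputable def caputoG (α γ t s : ℝ) : ℝ :=
  caputo γ (fun r => greenG α r s) t

/-!
Writing `K(s) = (1 - s)^(α-1)/Γ(α) + (1 - s)^(α-2)/Γ(α-1)`, the Green function is
`G(t,s) = (t - s)₊^(α-1)/Γ(α) + (1 - t) K(s)`, so its Caputo derivative has the closed form
`(t - s)₊^(α-1-γ)/Γ(α-γ) - K(s) t^(1-γ)/Γ(2-γ)`: the first term is a Beta integral, the
second the Caputo derivative of a linear function. On the unit square the first term lies in
`[0, 1/Γ(α-γ)]` and `Γ(α) ≥ 1`, while `0 ≤ K(s) ≤ 2/Γ(α-1)` because `Γ(α-1) ≤ Γ(α)`.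
-/

open Real

theorem Real.Gamma_eq_sub_one_mul {a : ℝ} (ha : a ≠ 1) : Gamma a = (a - 1) * Gamma (a - 1) := by
  simpa using Gamma_add_one (sub_ne_zero.2 ha)

theorem Real.one_le_Gamma {a : ℝ} (ha : 2 ≤ a) : 1 ≤ Gamma a :=
  Gamma_two ▸ Gamma_strictMonoOn_Ici.monotoneOn (by simp) ha ha

theorem integral_rpow_mul_sub_rpow {a b c : ℝ} (ha : 0 < a) (hb : 0 < b) (hc : 0 < c) :
    ∫ x in (0:ℝ)..c, x ^ (a - 1) * (c - x) ^ (b - 1)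
      = c ^ (a + b - 1) * (Gamma a * Gamma b / Gamma (a + b)) := by
  have h := Complex.betaIntegral_scaled a b hc
  rw [Complex.betaIntegral_eq_Gamma_mul_div _ _ (by simpa) (by simpa), ← Complex.ofReal_add,
    Complex.Gamma_ofReal, Complex.Gamma_ofReal, Complex.Gamma_ofReal] at h
  apply Complex.ofReal_injective
  rw [← intervalIntegral.integral_ofReal]
  convert h using 1
  · refine intervalIntegral.integral_congr fun x hx => ?_
    rw [uIcc_of_le hc.le] at hx
    push_cast
    rw [Complex.ofReal_cpow hx.1, Complex.ofReal_cpow (sub_nonneg.2 hx.2)]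
    push_cast; rfl
  · rw [Complex.ofReal_mul, Complex.ofReal_cpow hc.le]
    push_cast; rfl

theorem intervalIntegrable_sub_rpow {p : ℝ} (hp : -1 < p) (t a b : ℝ) :
    IntervalIntegrable (fun r => (t - r) ^ p) volume a b := by
  simpa using ((intervalIntegrable_rpow' (a := t - a) (b := t - b) hp).comp_sub_left t)

theorem integral_sub_rpow {p : ℝ} (hp : -1 < p) (t : ℝ) :
    ∫ r in (0:ℝ)..t, (t - r) ^ p = t ^ (p + 1) / (p + 1) := by
  rw [intervalIntegral.integral_comp_sub_left (fun x => x ^ p), sub_self, sub_zero,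
    integral_rpow (Or.inl hp), zero_rpow (by linarith), sub_zero]

theorem intervalIntegrable_sub_rpow_mul_max_sub_rpow {p q : ℝ} (hp : -1 < p) (hq : 0 ≤ q)
    (s t a b : ℝ) :
    IntervalIntegrable (fun r => (t - r) ^ p * max (r - s) 0 ^ q) volume a b :=
  (intervalIntegrable_sub_rpow hp t a b).mul_continuousOn
    (((continuous_id.sub continuous_const).max continuous_const).rpow_const
      fun _ => Or.inr hq).continuousOn

/-- `1 < a` rather than `0 < a`: with `a = 1` the integrand would be `(t - r) ^ (b - 1) * 0 ^ 0`,
nonzero to the left of `s`. -/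
theorem integral_sub_rpow_mul_max_sub_rpow {a b s t : ℝ} (ha : 1 < a) (hb : 0 < b)
    (hs : 0 ≤ s) :
    ∫ r in (0:ℝ)..t, (t - r) ^ (b - 1) * max (r - s) 0 ^ (a - 1)
      = max (t - s) 0 ^ (a + b - 1) * (Gamma a * Gamma b / Gamma (a + b)) := by
  have hzero : ∀ r ≤ s, (t - r) ^ (b - 1) * max (r - s) 0 ^ (a - 1) = 0 := fun r hr => by
    rw [max_eq_right (by linarith), zero_rpow (by linarith), mul_zero]
  rcases le_or_gt t s with hts | hst
  · rw [max_eq_right (by linarith), zero_rpow (by linarith), zero_mul]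
    refine (intervalIntegral.integral_congr fun r hr => hzero r ?_).trans
      intervalIntegral.integral_zero
    exact (mem_uIcc.1 hr).elim (fun h => by linarith [h.2]) (fun h => by linarith [h.2])
  have hint := intervalIntegrable_sub_rpow_mul_max_sub_rpow (by linarith : -1 < b - 1)
    (by linarith : 0 ≤ a - 1) s t 0 t
  have hs_mem : s ∈ uIcc 0 t := by rw [uIcc_of_le (by linarith)]; exact ⟨hs, hst.le⟩
  calc _ = ∫ r in s..t, (t - r) ^ (b - 1) * max (r - s) 0 ^ (a - 1) := by
        rw [← integral_add_adjacent_intervals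
            (hint.mono_set (uIcc_subset_uIcc left_mem_uIcc hs_mem))
            (hint.mono_set (uIcc_subset_uIcc hs_mem right_mem_uIcc)),
          intervalIntegral.integral_congr fun r hr => hzero r ((uIcc_of_le hs ▸ hr).2),
          intervalIntegral.integral_zero, zero_add]
    _ = ∫ x in (0:ℝ)..(t - s), x ^ (a - 1) * (t - s - x) ^ (b - 1) := by
        have h := intervalIntegral.integral_comp_add_right (a := 0) (b := t - s)
          (fun r => (t - r) ^ (b - 1) * max (r - s) 0 ^ (a - 1)) s
        rw [zero_add, sub_add_cancel] at h
        rw [← h]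
        refine intervalIntegral.integral_congr fun x hx => ?_
        rw [uIcc_of_le (by linarith)] at hx
        rw [add_sub_cancel_right, max_eq_left hx.1, sub_add_eq_sub_sub, sub_right_comm, mul_comm]
    _ = _ := by
        rw [integral_rpow_mul_sub_rpow (by linarith) hb (by linarith), max_eq_left (by linarith)]

theorem hasDerivAt_max_zero_rpow {p x : ℝ} (hp : 1 < p) (hx : x ≠ 0) :
    HasDerivAt (fun y => max y 0 ^ p) (p * max x 0 ^ (p - 1)) x := by
  rcases hx.lt_or_gt with hx | hx
  · have hev : (fun y => max y 0 ^ p) =ᶠ[nhds x] fun _ => 0 := by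
      filter_upwards [Iio_mem_nhds hx] with y hy
      rw [max_eq_right hy.le, zero_rpow (by linarith)]
    rw [max_eq_right hx.le, zero_rpow (by linarith), mul_zero]
    exact (hasDerivAt_const x 0).congr_of_eventuallyEq hev
  · have hev : (fun y => max y 0 ^ p) =ᶠ[nhds x] fun y => y ^ p := by
      filter_upwards [Ioi_mem_nhds hx] with y hy
      rw [max_eq_left hy.le]
    rw [max_eq_left hx.le]
    exact (hasDerivAt_rpow_const (Or.inl hx.ne')).congr_of_eventuallyEq hev

noncomputable def greenCoeff (α s : ℝ) : ℝ :=
  (1 - s) ^ (α - 1) / Gamma α + (1 - s) ^ (α - 2) / Gamma (α - 1)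

theorem greenG_eq_max_sub_rpow {α : ℝ} (hα : 1 < α) (t s : ℝ) :
    greenG α t s = max (t - s) 0 ^ (α - 1) / Gamma α + (1 - t) * greenCoeff α s := by
  unfold greenG greenCoeff
  split_ifs with hst
  · rw [max_eq_left (sub_nonneg.2 hst)]; ring
  · rw [max_eq_right (by linarith), zero_rpow (by linarith)]; ring

theorem deriv_greenG {α r s : ℝ} (hα : 2 < α) (hr : r ≠ s) :
    deriv (fun t => greenG α t s) r
      = max (r - s) 0 ^ (α - 2) / Gamma (α - 1) - greenCoeff α s := by
  have hpow : HasDerivAt (fun t => max (t - s) 0 ^ (α - 1))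
      ((α - 1) * max (r - s) 0 ^ (α - 2)) r := by
    simpa [Function.comp_def, show α - 1 - 1 = α - 2 by ring] using
      (hasDerivAt_max_zero_rpow (p := α - 1) (by linarith) (sub_ne_zero.2 hr)).comp r
        ((hasDerivAt_id r).sub_const s)
  have hG : HasDerivAt (fun t => max (t - s) 0 ^ (α - 1) / Gamma α + (1 - t) * greenCoeff α s)
      ((α - 1) * max (r - s) 0 ^ (α - 2) / Gamma α + -1 * greenCoeff α s) r :=
    (hpow.div_const _).add (((hasDerivAt_id r).const_sub 1).mul_const _)
  rw [funext (greenG_eq_max_sub_rpow (by linarith) · s), hG.deriv,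
    Gamma_eq_sub_one_mul (by linarith : α ≠ 1), mul_div_mul_left _ _ (by linarith : α - 1 ≠ 0)]
  ring

theorem caputoG_eq {α γ s : ℝ} (hγ : γ < 1) (hα : 2 < α) (hs : 0 ≤ s) (t : ℝ) :
    caputoG α γ t s = max (t - s) 0 ^ (α - 1 - γ) / Gamma (α - γ)
      - greenCoeff α s * t ^ (1 - γ) / Gamma (2 - γ) := by
  have hderiv : ∀ᵐ r, r ∈ uIoc 0 t → (t - r) ^ (-γ) * deriv (fun x => greenG α x s) r
      = (Gamma (α - 1))⁻¹ * ((t - r) ^ (-γ) * max (r - s) 0 ^ (α - 2))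
        - greenCoeff α s * (t - r) ^ (-γ) := by
    filter_upwards [compl_mem_ae_iff.2 (measure_singleton s)] with r hr _
    rw [deriv_greenG hα hr]
    ring
  have hRL := integral_sub_rpow_mul_max_sub_rpow (a := α - 1) (b := 1 - γ) (t := t)
    (by linarith) (by linarith) hs
  rw [show 1 - γ - 1 = -γ by ring, show α - 1 - 1 = α - 2 by ring,
    show α - 1 + (1 - γ) - 1 = α - 1 - γ by ring,
    show α - 1 + (1 - γ) = α - γ by ring] at hRL
  have hΓ2 : Gamma (2 - γ) = (1 - γ) * Gamma (1 - γ) := by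
    rw [Gamma_eq_sub_one_mul (by linarith)]; ring_nf
  rw [caputoG, caputo, integral_congr_ae hderiv,
    intervalIntegral.integral_sub
      ((intervalIntegrable_sub_rpow_mul_max_sub_rpow (by linarith) (by linarith)
        s t 0 t).const_mul _)
      ((intervalIntegrable_sub_rpow (by linarith) t 0 t).const_mul _),
    intervalIntegral.integral_const_mul, intervalIntegral.integral_const_mul, hRL,
    integral_sub_rpow (by linarith), hΓ2, show -γ + 1 = 1 - γ by ring]
  have := (Gamma_pos_of_pos (by linarith : 0 < α - 1)).ne'
  have := (Gamma_pos_of_pos (by linarith : 0 < 1 - γ)).ne'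
  have : 1 - γ ≠ 0 := by linarith
  field_simp

theorem greenCoeff_nonneg {α s : ℝ} (hα : 1 < α) (hs : s ≤ 1) : 0 ≤ greenCoeff α s := by
  have := Gamma_pos_of_pos (by linarith : 0 < α - 1)
  have := rpow_nonneg (sub_nonneg.2 hs) (α - 1)
  have := rpow_nonneg (sub_nonneg.2 hs) (α - 2)
  unfold greenCoeff
  positivity

theorem greenCoeff_le {α s : ℝ} (hα : 2 ≤ α) (hs0 : 0 ≤ s) (hs1 : s ≤ 1) :
    greenCoeff α s ≤ 2 / Gamma (α - 1) := by
  have hΓ := Gamma_pos_of_pos (by linarith : 0 < α - 1)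
  have hΓle : Gamma (α - 1) ≤ Gamma α := by
    rw [Gamma_eq_sub_one_mul (by linarith : α ≠ 1)]
    nlinarith
  have hle : ∀ p : ℝ, 0 ≤ p → (1 - s) ^ p ≤ 1 := fun p hp =>
    rpow_le_one (by linarith) (by linarith) hp
  calc greenCoeff α s ≤ 1 / Gamma (α - 1) + 1 / Gamma (α - 1) :=
        add_le_add (div_le_div₀ zero_le_one (hle _ (by linarith)) hΓ hΓle)
          (div_le_div_of_nonneg_right (hle _ (by linarith)) hΓ.le)
    _ = 2 / Gamma (α - 1) := by ring

theorem caputoG_bound_general (γ α : ℝ) (hγ2 : γ < 1)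
    (hα1 : 2 < α) :
    ∀ t ∈ Icc (0:ℝ) 1, ∀ s ∈ Icc (0:ℝ) 1,
      |caputoG α γ t s|
        ≤ Real.Gamma α / Real.Gamma (α - γ)
          + 2 / (Real.Gamma (2 - γ) * Real.Gamma (α - 1)) := by
  rintro t ⟨ht0, ht1⟩ s ⟨hs0, hs1⟩
  rw [caputoG_eq hγ2 hα1 hs0]
  have hΓαγ := Gamma_pos_of_pos (by linarith : 0 < α - γ)
  have hΓ2γ := Gamma_pos_of_pos (by linarith : 0 < 2 - γ)
  have hK0 := greenCoeff_nonneg (α := α) (by linarith) hs1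
  have hfirst : max (t - s) 0 ^ (α - 1 - γ) / Gamma (α - γ) ≤ Gamma α / Gamma (α - γ) := by
    gcongr
    exact (rpow_le_one (le_max_right _ _) (max_le (by linarith) zero_le_one) (by linarith)).trans
      (one_le_Gamma hα1.le)
  have hsecond : greenCoeff α s * t ^ (1 - γ) / Gamma (2 - γ)
      ≤ 2 / (Gamma (2 - γ) * Gamma (α - 1)) :=
    calc _ ≤ 2 / Gamma (α - 1) * 1 / Gamma (2 - γ) :=
          div_le_div_of_nonneg_right (mul_le_mul (greenCoeff_le hα1.le hs0 hs1)
            (rpow_le_one ht0 ht1 (by linarith)) (rpow_nonneg ht0 _)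
            (div_nonneg zero_le_two (Gamma_pos_of_pos (by linarith)).le)) hΓ2γ.le
      _ = _ := by ring
  have hfirst_nonneg : 0 ≤ max (t - s) 0 ^ (α - 1 - γ) / Gamma (α - γ) := by positivity
  have hsecond_nonneg : 0 ≤ greenCoeff α s * t ^ (1 - γ) / Gamma (2 - γ) := by positivity
  rw [abs_le]
  constructor <;> linarith

/-- For `0 < γ < 1` and `2 < α < 3`, the Caputo derivative of order `γ` of the
Green function `G` in its first variable satisfies
`|ᶜDᵞₜG(t,s)| ≤ Γ(α)/Γ(α−γ) + 2/(Γ(2−γ)Γ(α−1))` on the unit square. -/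
theorem caputoG_bound (γ α : ℝ) (hγ1 : 0 < γ) (hγ2 : γ < 1)
    (hα1 : 2 < α) (hα2 : α < 3) :
    ∀ t ∈ Icc (0:ℝ) 1, ∀ s ∈ Icc (0:ℝ) 1,
      |caputoG α γ t s|
        ≤ Real.Gamma α / Real.Gamma (α - γ)
          + 2 / (Real.Gamma (2 - γ) * Real.Gamma (α - 1)) :=
  caputoG_bound_general γ α hγ2 hα1
end
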